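/- arXiv:2103.00340 — 4 statements merged into one kernel-verified Lean document; each statement's English description precedes it below -/
import Mathlib

section
/- Let θ be a maximal monotone graph in ℝ×ℝ with 0 ∈ θ(0), and suppose r_θ := sup D(θ) < +∞ (the domain of θ is bounded above). Then for every λ > 0 and every r > r_θ + (1/λ)·θ⁰(r_θ), the Yosida approximation satisfies θ_λ(r) = λ(r − r_θ). -/
/-- A monotone graph in ℝ × ℝ, viewed as a set-valued map. -/
def MonotoneGraph (θ : ℝ → Set ℝ) : Prop :=
  ∀ ⦃x y u v : ℝ⦄, u ∈ θ x → v ∈ θ y → 0 ≤ (u - v) * (x - y)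

/-- A maximal monotone graph in ℝ × ℝ. -/
def MaximalMonotoneGraph (θ : ℝ → Set ℝ) : Prop :=
  MonotoneGraph θ ∧
    ∀ θ' : ℝ → Set ℝ, MonotoneGraph θ' → (∀ x, θ x ⊆ θ' x) → ∀ x, θ' x = θ x

/-!
Points of the graph of a monotone `θ` to the left of `rθ` lie below `θ0 ∈ θ rθ`, so any
`v ≥ θ0` added to `θ rθ`, where `rθ = sup D(θ)`, keeps the graph monotone; by maximality `[θ0, ∞) ⊆ θ rθ`.
Hence `r = rθ + (1/λ) λ (r - rθ)` with `λ (r - rθ) > θ0` in `θ rθ`, and the resolvent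
`(I + (1/λ)θ)⁻¹ r` is `rθ`, being single-valued for a monotone graph.
-/

namespace MonotoneGraph

variable {θ : ℝ → Set ℝ}

theorem le_of_mem_of_lt (hθ : MonotoneGraph θ) {x y u w : ℝ} (hu : u ∈ θ x) (hw : w ∈ θ y)
    (hxy : x < y) : u ≤ w := by
  have := hθ hw hu
  nlinarith

theorem resolvent_unique (hθ : MonotoneGraph θ) {lam s s' v v' : ℝ} (hlam : 0 < lam)
    (hv : v ∈ θ s) (hv' : v' ∈ θ s') (h : s + (1 / lam) * v = s' + (1 / lam) * v') :
    s = s' := by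
  have hdiff : v - v' = lam * (s' - s) := by
    field_simp at h
    linarith
  have hsq : lam * (s - s') ^ 2 ≤ 0 := by
    have hmono := hθ hv hv'
    rw [hdiff] at hmono
    linarith
  have : (s - s') ^ 2 = 0 := le_antisymm (nonpos_of_mul_nonpos_right hsq hlam) (sq_nonneg _)
  exact sub_eq_zero.mp (pow_eq_zero_iff two_ne_zero |>.mp this)

end MonotoneGraph

namespace MaximalMonotoneGraph

variable {θ : ℝ → Set ℝ}

theorem mem_of_forall_monotone (hθ : MaximalMonotoneGraph θ) {x v : ℝ}
    (h : ∀ y b, b ∈ θ y → 0 ≤ (v - b) * (x - y)) : v ∈ θ x := by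
  let θ' : ℝ → Set ℝ := fun y ↦ {b | b ∈ θ y ∨ (y = x ∧ b = v)}
  have hmono : MonotoneGraph θ' := by
    rintro y z b c (hb | ⟨rfl, rfl⟩) (hc | ⟨rfl, rfl⟩)
    · exact hθ.1 hb hc
    · nlinarith [h y b hb]
    · exact h z c hc
    · simp
  have hsub : ∀ y, θ y ⊆ θ' y := fun _ _ hb ↦ Or.inl hb
  rw [← hθ.2 θ' hmono hsub x]
  exact Or.inr ⟨rfl, rfl⟩

theorem mem_of_le_of_mem_upperBounds (hθ : MaximalMonotoneGraph θ) {x w v : ℝ}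
    (hx : x ∈ upperBounds {s | (θ s).Nonempty}) (hw : w ∈ θ x) (hwv : w ≤ v) : v ∈ θ x := by
  refine hθ.mem_of_forall_monotone fun y b hb ↦ ?_
  rcases (hx ⟨b, hb⟩ : y ≤ x).lt_or_eq with hyx | rfl
  · nlinarith [hθ.1.le_of_mem_of_lt hb hw hyx]
  · simp

end MaximalMonotoneGraph

theorem stmt0_general (θ : ℝ → Set ℝ) (hθ : MaximalMonotoneGraph θ)
    (hbdd : BddAbove {s : ℝ | (θ s).Nonempty})
    (rθ : ℝ) (hrθ : rθ = sSup {s : ℝ | (θ s).Nonempty})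
    (θ0 : ℝ) (hθ0mem : θ0 ∈ θ rθ)
    (lam : ℝ) (hlam : 0 < lam) (r : ℝ) (hr : rθ + (1 / lam) * θ0 < r) :
    (∃ s v : ℝ, v ∈ θ s ∧ r = s + (1 / lam) * v) ∧
      ∀ s v : ℝ, v ∈ θ s → r = s + (1 / lam) * v →
        lam * (r - s) = lam * (r - rθ) := by
  have hub : rθ ∈ upperBounds {s | (θ s).Nonempty} := hrθ ▸ fun _ hs ↦ le_csSup hbdd hs
  have hθ0_le : θ0 ≤ lam * (r - rθ) := by
    rw [one_div_mul_eq_div, ← lt_sub_iff_add_lt', div_lt_iff₀ hlam] at hr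
    linarith
  have hmem : lam * (r - rθ) ∈ θ rθ := hθ.mem_of_le_of_mem_upperBounds hub hθ0mem hθ0_le
  have hr_eq : r = rθ + (1 / lam) * (lam * (r - rθ)) := by field_simp; ring
  refine ⟨⟨rθ, _, hmem, hr_eq⟩, fun s v hv hrs ↦ ?_⟩
  rw [hθ.1.resolvent_unique hlam hv hmem (hrs.symm.trans hr_eq)]

/-- If `θ` is a maximal monotone graph with `0 ∈ θ 0` whose domain is bounded above with
supremum `rθ`, and `θ0` is the minimal-absolute-value element of `θ rθ`, then for `λ > 0`
and `r > rθ + (1/λ) θ0`, the Yosida approximation `θ_λ(r) = λ (r - J_λ r)` equals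
`λ (r - rθ)` (here `J_λ r = s` means `r ∈ s + (1/λ) θ(s)`). -/
theorem stmt0 (θ : ℝ → Set ℝ) (hθ : MaximalMonotoneGraph θ)
    (h0 : (0 : ℝ) ∈ θ 0)
    (hbdd : BddAbove {s : ℝ | (θ s).Nonempty})
    (rθ : ℝ) (hrθ : rθ = sSup {s : ℝ | (θ s).Nonempty})
    (θ0 : ℝ) (hθ0mem : θ0 ∈ θ rθ) (hθ0min : ∀ v ∈ θ rθ, |θ0| ≤ |v|)
    (lam : ℝ) (hlam : 0 < lam) (r : ℝ) (hr : rθ + (1 / lam) * θ0 < r) :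
    (∃ s v : ℝ, v ∈ θ s ∧ r = s + (1 / lam) * v) ∧
      ∀ s v : ℝ, v ∈ θ s → r = s + (1 / lam) * v →
        lam * (r - s) = lam * (r - rθ) :=
  stmt0_general θ hθ hbdd rθ hrθ θ0 hθ0mem lam hlam r hr
end

section
/- Integration by parts formula: Let [X,d,m] be a metric random walk space with reversible measure ν, let Ω ⊂ X, and let a_p satisfy the antisymmetry a_p(x,y,r) = −a_p(y,x,−r). If u is ν-measurable with (x,y) ↦ a_p(x,y,u(y)−u(x)) ∈ L^q(Ω×Ω, ν⊗m_x) and w ∈ L^{q'}(Ω,ν), then −∫_Ω ∫_Ω a_p(x,y,u(y)−u(x)) dm_x(y) w(x) dν(x) = (1/2) ∫_{Ω×Ω} a_p(x,y,u(y)−u(x))(w(y)−w(x)) d(ν⊗m_x)(x,y). -/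
/-!
Split `F(x,y)(w(y) - w(x))` into `F(x,y) w(y)` and `-F(x,y) w(x)`. Both are integrable for
`ν ⊗ m_x`: Hölder's inequality in `y` against the finite measure `m_x`, then in `x` against `ν`,
bounds the second by `‖F‖_q ‖w‖_{q'}`, and reversibility turns the first into the second.
Reversibility followed by antisymmetry also shows that the two iterated integrals are opposite,
so the right-hand side is `-∫∫ F(x,y) w(x)`, which is the left-hand side.
-/

open MeasureTheory ProbabilityTheory Function
open scoped ENNReal

section IteratedIntegral

variable {X Y : Type*} [MeasurableSpace X] [MeasurableSpace Y]
  {κ : Kernel X Y} [IsSFiniteKernel κ] {ν : Measure X} {g g₁ g₂ : X → Y → ℝ}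

lemma ae_integrable_of_lintegral_lintegral_enorm_lt_top (hg : Measurable (uncurry g))
    (hfin : ∫⁻ x, ∫⁻ y, ‖g x y‖ₑ ∂κ x ∂ν < ∞) : ∀ᵐ x ∂ν, Integrable (g x) (κ x) := by
  have hmeas : Measurable fun x => ∫⁻ y, ‖g x y‖ₑ ∂κ x := hg.enorm.lintegral_kernel_prod_right
  filter_upwards [ae_lt_top hmeas hfin.ne] with x hx
  exact ⟨hg.of_uncurry_left.aestronglyMeasurable, hx⟩

lemma integrable_integral_of_lintegral_lintegral_enorm_lt_top (hg : Measurable (uncurry g))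
    (hfin : ∫⁻ x, ∫⁻ y, ‖g x y‖ₑ ∂κ x ∂ν < ∞) : Integrable (fun x => ∫ y, g x y ∂κ x) ν :=
  ⟨hg.stronglyMeasurable.integral_kernel_prod_right.aestronglyMeasurable,
    (lintegral_mono fun _ => enorm_integral_le_lintegral_enorm _).trans_lt hfin⟩

lemma integral_integral_sub (hg₁ : Measurable (uncurry g₁)) (hg₂ : Measurable (uncurry g₂))
    (hfin₁ : ∫⁻ x, ∫⁻ y, ‖g₁ x y‖ₑ ∂κ x ∂ν < ∞) (hfin₂ : ∫⁻ x, ∫⁻ y, ‖g₂ x y‖ₑ ∂κ x ∂ν < ∞) :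
    ∫ x, ∫ y, (g₁ x y - g₂ x y) ∂κ x ∂ν
      = ∫ x, ∫ y, g₁ x y ∂κ x ∂ν - ∫ x, ∫ y, g₂ x y ∂κ x ∂ν := by
  rw [← integral_sub (integrable_integral_of_lintegral_lintegral_enorm_lt_top hg₁ hfin₁)
    (integrable_integral_of_lintegral_lintegral_enorm_lt_top hg₂ hfin₂)]
  refine integral_congr_ae ?_
  filter_upwards [ae_integrable_of_lintegral_lintegral_enorm_lt_top hg₁ hfin₁,
    ae_integrable_of_lintegral_lintegral_enorm_lt_top hg₂ hfin₂] with x hx₁ hx₂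
  exact integral_sub hx₁ hx₂

lemma integral_integral_eq_lintegral_lintegral_pos_part_sub_neg_part
    (hg : Measurable (uncurry g)) (hfin : ∫⁻ x, ∫⁻ y, ‖g x y‖ₑ ∂κ x ∂ν < ∞) :
    ∫ x, ∫ y, g x y ∂κ x ∂ν
      = (∫⁻ x, ∫⁻ y, ENNReal.ofReal (g x y) ∂κ x ∂ν).toReal
        - (∫⁻ x, ∫⁻ y, ENNReal.ofReal (-g x y) ∂κ x ∂ν).toReal := by
  have hpos : Measurable fun x => ∫⁻ y, ENNReal.ofReal (g x y) ∂κ x :=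
    hg.ennreal_ofReal.lintegral_kernel_prod_right (f := fun x y => ENNReal.ofReal (g x y))
  have hneg : Measurable fun x => ∫⁻ y, ENNReal.ofReal (-g x y) ∂κ x :=
    hg.neg.ennreal_ofReal.lintegral_kernel_prod_right (f := fun x y => ENNReal.ofReal (-g x y))
  have hpos_fin : ∫⁻ x, ∫⁻ y, ENNReal.ofReal (g x y) ∂κ x ∂ν ≠ ∞ :=
    ((lintegral_mono fun _ => lintegral_mono fun _ => Real.ofReal_le_enorm _).trans_lt hfin).ne
  have hneg_fin : ∫⁻ x, ∫⁻ y, ENNReal.ofReal (-g x y) ∂κ x ∂ν ≠ ∞ := by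
    refine ((lintegral_mono fun _ => lintegral_mono fun y => ?_).trans_lt hfin).ne
    exact (Real.ofReal_le_enorm _).trans_eq (enorm_neg _)
  calc ∫ x, ∫ y, g x y ∂κ x ∂ν
      = ∫ x, (∫⁻ y, ENNReal.ofReal (g x y) ∂κ x).toReal
          - (∫⁻ y, ENNReal.ofReal (-g x y) ∂κ x).toReal ∂ν :=
        integral_congr_ae <| (ae_integrable_of_lintegral_lintegral_enorm_lt_top hg hfin).mono
          fun _ hx => integral_eq_lintegral_pos_part_sub_lintegral_neg_part hx
    _ = _ := by
      rw [integral_sub (integrable_toReal_of_lintegral_ne_top hpos.aemeasurable hpos_fin)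
          (integrable_toReal_of_lintegral_ne_top hneg.aemeasurable hneg_fin),
        integral_toReal hpos.aemeasurable (ae_lt_top hpos hpos_fin),
        integral_toReal hneg.aemeasurable (ae_lt_top hneg hneg_fin)]

end IteratedIntegral

lemma lintegral_le_lintegral_rpow_mul_measure_univ {α : Type*} [MeasurableSpace α]
    (μ : Measure α) {p q : ℝ} (hpq : p.HolderConjugate q) {f : α → ℝ≥0∞}
    (hf : AEMeasurable f μ) :
    ∫⁻ a, f a ∂μ ≤ (∫⁻ a, f a ^ p ∂μ) ^ (1 / p) * μ Set.univ ^ (1 / q) := by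
  simpa using ENNReal.lintegral_mul_le_Lp_mul_Lq μ hpq hf (aemeasurable_const (b := 1))

lemma lintegral_lintegral_mul_lt_top {X Y : Type*} [MeasurableSpace X] [MeasurableSpace Y]
    {κ : Kernel X Y} [IsFiniteKernel κ] {ν : Measure X} {p q : ℝ} (hpq : p.HolderConjugate q)
    {f : X → Y → ℝ≥0∞} (hf : Measurable (uncurry f)) {g : X → ℝ≥0∞} (hg : AEMeasurable g ν)
    (hfp : ∫⁻ x, ∫⁻ y, f x y ^ p ∂κ x ∂ν < ∞) (hgq : ∫⁻ x, g x ^ q ∂ν < ∞) :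
    ∫⁻ x, ∫⁻ y, f x y * g x ∂κ x ∂ν < ∞ := by
  set A : X → ℝ≥0∞ := fun x => ∫⁻ y, f x y ^ p ∂κ x
  have hA : Measurable A := (hf.pow_const p).lintegral_kernel_prod_right
  have hinner : ∀ x, ∫⁻ y, f x y * g x ∂κ x ≤ κ.bound ^ (1 / q) * (A x ^ (1 / p) * g x) := by
    intro x
    calc ∫⁻ y, f x y * g x ∂κ x = (∫⁻ y, f x y ∂κ x) * g x :=
          lintegral_mul_const'' _ hf.of_uncurry_left.aemeasurable
      _ ≤ A x ^ (1 / p) * κ x Set.univ ^ (1 / q) * g x := by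
          gcongr
          exact lintegral_le_lintegral_rpow_mul_measure_univ _ hpq
            hf.of_uncurry_left.aemeasurable
      _ ≤ A x ^ (1 / p) * κ.bound ^ (1 / q) * g x := by
          gcongr
          · exact hpq.symm.one_div_nonneg
          · exact κ.measure_le_bound x _
      _ = κ.bound ^ (1 / q) * (A x ^ (1 / p) * g x) := by ring
  have hA_rpow : ∀ x, (A x ^ (1 / p)) ^ p = A x := fun x => by
    rw [← ENNReal.rpow_mul, one_div_mul_cancel hpq.ne_zero, ENNReal.rpow_one]
  calc ∫⁻ x, ∫⁻ y, f x y * g x ∂κ x ∂ν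
      ≤ ∫⁻ x, κ.bound ^ (1 / q) * (A x ^ (1 / p) * g x) ∂ν := lintegral_mono hinner
    _ = κ.bound ^ (1 / q) * ∫⁻ x, A x ^ (1 / p) * g x ∂ν :=
        lintegral_const_mul' _ _ (ENNReal.rpow_ne_top_of_nonneg hpq.symm.one_div_nonneg
          κ.bound_ne_top)
    _ ≤ κ.bound ^ (1 / q) * ((∫⁻ x, A x ∂ν) ^ (1 / p) * (∫⁻ x, g x ^ q ∂ν) ^ (1 / q)) := by
        gcongr
        simpa only [Pi.mul_apply, hA_rpow] using
          ENNReal.lintegral_mul_le_Lp_mul_Lq ν hpq (hA.pow_const (1 / p)).aemeasurable hg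
    _ < ∞ := ENNReal.mul_lt_top
        (ENNReal.rpow_lt_top_of_nonneg hpq.symm.one_div_nonneg κ.bound_ne_top)
        (ENNReal.mul_lt_top (ENNReal.rpow_lt_top_of_nonneg hpq.one_div_nonneg hfp.ne)
          (ENNReal.rpow_lt_top_of_nonneg hpq.symm.one_div_nonneg hgq.ne))

lemma lintegral_lintegral_restrict {X Y : Type*} [MeasurableSpace X] [MeasurableSpace Y]
    {κ : Kernel X Y} {ν : Measure X} {s : Set X} {t : Set Y} (ht : MeasurableSet t)
    (hs : MeasurableSet s) (f : X → Y → ℝ≥0∞) :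
    ∫⁻ x, ∫⁻ y, f x y ∂κ.restrict ht x ∂ν.restrict s
      = ∫⁻ x, ∫⁻ y, (s ×ˢ t).indicator (uncurry f) (x, y) ∂κ x ∂ν := by
  rw [← lintegral_indicator hs]
  refine lintegral_congr fun x => ?_
  by_cases hx : x ∈ s
  · rw [Set.indicator_of_mem hx, Kernel.restrict_apply, ← lintegral_indicator ht]
    refine lintegral_congr fun y => ?_
    by_cases hy : y ∈ t <;> simp [hx, hy]
  · simp [hx]

/-- `dκ_x(y) dν(x) = dκ_y(x) dν(y)`, tested on iterated integrals: `ν` need not be s-finite,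
so the measure `ν ⊗ₘ κ` is not available. -/
def IsReversible {X : Type*} [MeasurableSpace X] (κ : Kernel X X) (ν : Measure X) : Prop :=
  ∀ f : X → X → ℝ≥0∞, Measurable (uncurry f) →
    ∫⁻ x, ∫⁻ y, f x y ∂κ x ∂ν = ∫⁻ x, ∫⁻ y, f y x ∂κ x ∂ν

namespace IsReversible

variable {X : Type*} [MeasurableSpace X] {κ : Kernel X X} {ν : Measure X}

lemma restrict (hrev : IsReversible κ ν) {s : Set X} (hs : MeasurableSet s) :
    IsReversible (κ.restrict hs) (ν.restrict s) := by
  intro f hf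
  rw [lintegral_lintegral_restrict hs hs, lintegral_lintegral_restrict hs hs,
    hrev (fun x y => (s ×ˢ s).indicator (uncurry f) (x, y)) (hf.indicator (hs.prod hs))]
  refine lintegral_congr fun x => lintegral_congr fun y => ?_
  by_cases hx : x ∈ s <;> by_cases hy : y ∈ s <;> simp [hx, hy]

lemma ae_ae_of_ae (hrev : IsReversible κ ν) {P : X → Prop} (hP : ∀ᵐ y ∂ν, P y) :
    ∀ᵐ x ∂ν, ∀ᵐ y ∂κ x, P y := by
  obtain ⟨N, hPN, hN, hνN⟩ := exists_measurable_superset_of_null (ae_iff.mp hP)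
  have hrevN := hrev (fun x _ => N.indicator 1 x)
    ((measurable_one.indicator hN).comp measurable_fst)
  have hzero : ∫⁻ x, ∫⁻ _, N.indicator 1 x ∂κ x ∂ν = 0 := by
    refine (lintegral_congr_ae ?_).trans lintegral_zero
    filter_upwards [measure_eq_zero_iff_ae_notMem.mp hνN] with x hx
    simp [hx]
  simp only [lintegral_indicator_one hN, hzero] at hrevN
  filter_upwards [(lintegral_eq_zero_iff (κ.measurable_coe hN)).mp hrevN.symm] with x hx
  exact ae_iff.mpr (measure_mono_null hPN hx)

lemma integral_integral_swap [IsSFiniteKernel κ] (hrev : IsReversible κ ν) {g : X → X → ℝ}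
    (hg : Measurable (uncurry g)) (hfin : ∫⁻ x, ∫⁻ y, ‖g x y‖ₑ ∂κ x ∂ν < ∞) :
    ∫ x, ∫ y, g y x ∂κ x ∂ν = ∫ x, ∫ y, g x y ∂κ x ∂ν := by
  have hfin_swap : ∫⁻ x, ∫⁻ y, ‖g y x‖ₑ ∂κ x ∂ν < ∞ := by
    rwa [← hrev (fun x y => ‖g x y‖ₑ) hg.enorm]
  rw [integral_integral_eq_lintegral_lintegral_pos_part_sub_neg_part (g := fun x y => g y x)
      (hg.comp measurable_swap) hfin_swap,
    integral_integral_eq_lintegral_lintegral_pos_part_sub_neg_part hg hfin,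
    hrev (fun x y => ENNReal.ofReal (g x y)) hg.ennreal_ofReal,
    hrev (fun x y => ENNReal.ofReal (-g x y)) hg.neg.ennreal_ofReal]

variable [IsFiniteKernel κ] {q q' : ℝ} {F : X → X → ℝ} {w : X → ℝ}

theorem integration_by_parts_of_measurable (hrev : IsReversible κ ν)
    (hqq' : q.HolderConjugate q') (hF : Measurable (uncurry F))
    (hanti : ∀ᵐ x ∂ν, ∀ᵐ y ∂κ x, F y x = -F x y)
    (hFq : ∫⁻ x, ∫⁻ y, ‖F x y‖ₑ ^ q ∂κ x ∂ν < ∞)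
    (hw : Measurable w) (hwq : ∫⁻ x, ‖w x‖ₑ ^ q' ∂ν < ∞) :
    -∫ x, (∫ y, F x y ∂κ x) * w x ∂ν = 1 / 2 * ∫ x, ∫ y, F x y * (w y - w x) ∂κ x ∂ν := by
  have hg₁ : Measurable (uncurry fun x y => F x y * w x) := hF.mul (hw.comp measurable_fst)
  have hg₂ : Measurable (uncurry fun x y => F x y * w y) := hF.mul (hw.comp measurable_snd)
  have hfin₁ : ∫⁻ x, ∫⁻ y, ‖F x y * w x‖ₑ ∂κ x ∂ν < ∞ := by
    simpa only [enorm_mul] using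
      lintegral_lintegral_mul_lt_top hqq' hF.enorm hw.enorm.aemeasurable hFq hwq
  have hanti_mul : ∀ᵐ x ∂ν, ∀ᵐ y ∂κ x, F y x * w x = -(F x y * w x) := by
    filter_upwards [hanti] with x hx
    filter_upwards [hx] with y hy
    rw [hy, neg_mul]
  have hfin₂ : ∫⁻ x, ∫⁻ y, ‖F x y * w y‖ₑ ∂κ x ∂ν < ∞ := by
    rw [hrev (fun x y => ‖F x y * w y‖ₑ) hg₂.enorm]
    refine lt_of_eq_of_lt (lintegral_congr_ae ?_) hfin₁
    filter_upwards [hanti_mul] with x hx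
    exact lintegral_congr_ae (hx.mono fun y hy => by simp only [hy, enorm_neg])
  have hswap : ∫ x, ∫ y, F x y * w y ∂κ x ∂ν = -∫ x, ∫ y, F x y * w x ∂κ x ∂ν := by
    rw [← hrev.integral_integral_swap hg₂ hfin₂, ← integral_neg]
    exact integral_congr_ae
      (hanti_mul.mono fun x hx => (integral_congr_ae hx).trans (integral_neg _))
  calc -∫ x, (∫ y, F x y ∂κ x) * w x ∂ν = -∫ x, ∫ y, F x y * w x ∂κ x ∂ν := by
        simp_rw [integral_mul_const]
    _ = 1 / 2 * (∫ x, ∫ y, F x y * w y ∂κ x ∂ν - ∫ x, ∫ y, F x y * w x ∂κ x ∂ν) := by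
        rw [hswap]; ring
    _ = 1 / 2 * ∫ x, ∫ y, F x y * (w y - w x) ∂κ x ∂ν := by
        rw [← integral_integral_sub hg₂ hg₁ hfin₂ hfin₁]
        simp_rw [mul_sub]

theorem integration_by_parts (hrev : IsReversible κ ν)
    (hqq' : q.HolderConjugate q') (hF : Measurable (uncurry F))
    (hanti : ∀ᵐ x ∂ν, ∀ᵐ y ∂κ x, F y x = -F x y)
    (hFq : ∫⁻ x, ∫⁻ y, ‖F x y‖ₑ ^ q ∂κ x ∂ν < ∞) (hw : MemLp w (ENNReal.ofReal q') ν) :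
    -∫ x, (∫ y, F x y ∂κ x) * w x ∂ν = 1 / 2 * ∫ x, ∫ y, F x y * (w y - w x) ∂κ x ∂ν := by
  obtain ⟨w', hw', hww'⟩ := hw.aestronglyMeasurable
  -- The inner integrals see `w` on `ν`-null sets, which are `κ x`-null for `ν`-a.e. `x`.
  have hww'_kernel : ∀ᵐ x ∂ν, ∀ᵐ y ∂κ x, w y = w' y := hrev.ae_ae_of_ae hww'
  have hw'q : ∫⁻ x, ‖w' x‖ₑ ^ q' ∂ν < ∞ := by
    simpa only [ENNReal.toReal_ofReal hqq'.symm.nonneg] using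
      lintegral_rpow_enorm_lt_top_of_eLpNorm_lt_top (ENNReal.ofReal_pos.2 hqq'.symm.pos).ne'
        ENNReal.ofReal_ne_top (hw.ae_eq hww').2
  convert hrev.integration_by_parts_of_measurable hqq' hF hanti hFq
    hw'.measurable hw'q using 2
  · exact integral_congr_ae (hww'.mono fun x hx => by simp only [hx])
  · refine integral_congr_ae ?_
    filter_upwards [hww', hww'_kernel] with x hx hxy
    exact integral_congr_ae (hxy.mono fun y hy => by simp only [hx, hy])

end IsReversible

/-- Integration by parts formula: if `ν` is reversible with respect to `m`, `a_p` is
antisymmetric (`a_p(x,y,r) = -a_p(y,x,-r)`), `(x,y) ↦ a_p(x,y,u(y)-u(x)) ∈ L^q(Ω×Ω, ν⊗m_x)`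
and `w ∈ L^{q'}(Ω,ν)`, then
`-∫_Ω ∫_Ω a_p(x,y,u(y)-u(x)) dm_x(y) w(x) dν(x)
  = (1/2) ∫_Ω ∫_Ω a_p(x,y,u(y)-u(x)) (w(y)-w(x)) dm_x(y) dν(x)`. -/
theorem stmt9 {X : Type*} [MeasurableSpace X] (m : X → Measure X)
    (hprob : ∀ x, IsProbabilityMeasure (m x)) (hmeas : Measurable m)
    (ν : Measure X)
    (hrev : ∀ f : X → X → ℝ≥0∞, Measurable (Function.uncurry f) →
      ∫⁻ x, ∫⁻ y, f x y ∂(m x) ∂ν = ∫⁻ x, ∫⁻ y, f y x ∂(m x) ∂ν)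
    (Ω : Set X) (hΩ : MeasurableSet Ω)
    (q q' : ℝ) (hq : 1 < q) (hq' : 1 / q + 1 / q' = 1)
    (a : X → X → ℝ → ℝ)
    (hameas : Measurable (fun z : X × X × ℝ => a z.1 z.2.1 z.2.2))
    (hasym : ∀ᵐ x ∂ν, ∀ᵐ y ∂(m x), ∀ r : ℝ, a x y r = - a y x (-r))
    (u : X → ℝ) (humeas : Measurable u)
    (hF : ∫⁻ x in Ω, ∫⁻ y in Ω,
        ENNReal.ofReal (|a x y (u y - u x)| ^ q) ∂(m x) ∂ν < ⊤)
    (w : X → ℝ) (hw : MemLp w (ENNReal.ofReal q') (ν.restrict Ω)) :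
    -∫ x in Ω, (∫ y in Ω, a x y (u y - u x) ∂(m x)) * w x ∂ν
      = (1 / 2) * ∫ x in Ω, ∫ y in Ω, a x y (u y - u x) * (w y - w x) ∂(m x) ∂ν := by
  let κ : Kernel X X := ⟨m, hmeas⟩
  have : IsMarkovKernel κ := ⟨hprob⟩
  have hqq' : q.HolderConjugate q' :=
    Real.holderConjugate_iff.mpr ⟨hq, by simpa only [one_div] using hq'⟩
  have hF_meas : Measurable (uncurry fun x y => a x y (u y - u x)) :=
    hameas.comp (measurable_fst.prodMk (measurable_snd.prodMk
      ((humeas.comp measurable_snd).sub (humeas.comp measurable_fst))))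
  have hanti : ∀ᵐ x ∂ν.restrict Ω, ∀ᵐ y ∂κ.restrict hΩ x,
      a y x (u x - u y) = -a x y (u y - u x) := by
    filter_upwards [ae_restrict_of_ae hasym] with x hx
    filter_upwards [ae_restrict_of_ae hx] with y hy
    rw [hy (u y - u x), neg_sub, neg_neg]
  have hFq : ∫⁻ x, ∫⁻ y, ‖a x y (u y - u x)‖ₑ ^ q ∂κ.restrict hΩ x ∂ν.restrict Ω < ∞ := by
    simp only [Kernel.lintegral_restrict, Real.enorm_eq_ofReal_abs,
      ENNReal.ofReal_rpow_of_nonneg (abs_nonneg _) hqq'.nonneg]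
    exact hF
  exact ((show IsReversible κ ν from hrev).restrict hΩ).integration_by_parts
    hqq' hF_meas hanti hFq hw
end

section
/- Monotonicity under the integration by parts formula: with Ω, m, ν and a_p as above (a_p antisymmetric, a_p(x,y,·) strictly increasing), if u₁, u₂ are ν-measurable functions with a_p(x,y,u_i(y)−u_i(x)) ∈ L^{p'}(Ω×Ω,ν⊗m_x) and T: ℝ → ℝ is nondecreasing and bounded, then (1/2)∫_{Ω×Ω} (a_p(x,y,u₁(y)−u₁(x)) − a_p(x,y,u₂(y)−u₂(x)))·(T(u₁(y)−u₂(y)) − T(u₁(x)−u₂(x))) d(ν⊗m_x)(x,y) ≥ 0. -/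
open MeasureTheory
open scoped ENNReal

lemma strictMono_of_forall_pos_mul_sub {f : ℝ → ℝ}
    (hf : ∀ r s : ℝ, r ≠ s → 0 < (f r - f s) * (r - s)) : StrictMono f := by
  intro s r hsr
  have := hf r s hsr.ne'
  exact sub_pos.1 (pos_of_mul_pos_left this (sub_pos.2 hsr).le)

lemma mul_sub_nonneg_of_monotone {f g : ℝ → ℝ} (hf : Monotone f) (hg : Monotone g)
    {r s b c : ℝ} (h : b - c = r - s) : 0 ≤ (f r - f s) * (g b - g c) := by
  rcases le_total s r with hsr | hrs
  · exact mul_nonneg (sub_nonneg.2 (hf hsr)) (sub_nonneg.2 (hg (by linarith)))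
  · exact mul_nonneg_of_nonpos_of_nonpos (sub_nonpos.2 (hf hrs)) (sub_nonpos.2 (hg (by linarith)))

theorem stmt10_general {X : Type*} [MeasurableSpace X] (m : X → Measure X)
    (ν : Measure X)
    (Ω : Set X)
    (a : X → X → ℝ → ℝ)
    (hmono : ∀ᵐ x ∂ν, ∀ᵐ y ∂(m x), ∀ r s : ℝ, r ≠ s → 0 < (a x y r - a x y s) * (r - s))
    (u₁ u₂ : X → ℝ)
    (T : ℝ → ℝ) (hT : Monotone T) :
    0 ≤ (1 / 2) * ∫ x in Ω, ∫ y in Ω,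
        (a x y (u₁ y - u₁ x) - a x y (u₂ y - u₂ x)) *
          (T (u₁ y - u₂ y) - T (u₁ x - u₂ x)) ∂(m x) ∂ν := by
  -- The integrand is pointwise nonnegative, since the arguments of `a x y` and of `T` have the same
  -- difference `(u₁ y - u₂ y) - (u₁ x - u₂ x)`.
  refine mul_nonneg (by norm_num) (integral_nonneg_of_ae ?_)
  filter_upwards [ae_restrict_of_ae hmono] with x hx
  refine integral_nonneg_of_ae ?_
  filter_upwards [ae_restrict_of_ae hx] with y hy
  exact mul_sub_nonneg_of_monotone (strictMono_of_forall_pos_mul_sub hy).monotone hT (by ring)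

/-- Monotonicity: if `a_p` is antisymmetric and strictly monotone in its last variable,
`u₁, u₂` have nonlocal Leray–Lions integrands in `L^{p'}(Ω×Ω, ν⊗m_x)`, and `T : ℝ → ℝ` is
nondecreasing and bounded, then
`(1/2)∫_Ω∫_Ω (a_p(x,y,u₁(y)-u₁(x)) - a_p(x,y,u₂(y)-u₂(x)))
    (T(u₁(y)-u₂(y)) - T(u₁(x)-u₂(x))) dm_x(y) dν(x) ≥ 0`. -/
theorem stmt10 {X : Type*} [MeasurableSpace X] (m : X → Measure X)
    (hprob : ∀ x, IsProbabilityMeasure (m x)) (hmeas : Measurable m)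
    (ν : Measure X)
    (hrev : ∀ f : X → X → ℝ≥0∞, Measurable (Function.uncurry f) →
      ∫⁻ x, ∫⁻ y, f x y ∂(m x) ∂ν = ∫⁻ x, ∫⁻ y, f y x ∂(m x) ∂ν)
    (Ω : Set X) (hΩ : MeasurableSet Ω)
    (p p' : ℝ) (hp : 1 < p) (hp' : 1 / p + 1 / p' = 1)
    (a : X → X → ℝ → ℝ)
    (hameas : Measurable (fun z : X × X × ℝ => a z.1 z.2.1 z.2.2))
    (hasym : ∀ᵐ x ∂ν, ∀ᵐ y ∂(m x), ∀ r : ℝ, a x y r = - a y x (-r))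
    (hmono : ∀ᵐ x ∂ν, ∀ᵐ y ∂(m x), ∀ r s : ℝ, r ≠ s → 0 < (a x y r - a x y s) * (r - s))
    (u₁ u₂ : X → ℝ) (hu₁ : Measurable u₁) (hu₂ : Measurable u₂)
    (hF₁ : ∫⁻ x in Ω, ∫⁻ y in Ω,
        ENNReal.ofReal (|a x y (u₁ y - u₁ x)| ^ p') ∂(m x) ∂ν < ⊤)
    (hF₂ : ∫⁻ x in Ω, ∫⁻ y in Ω,
        ENNReal.ofReal (|a x y (u₂ y - u₂ x)| ^ p') ∂(m x) ∂ν < ⊤)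
    (T : ℝ → ℝ) (hT : Monotone T) (hTbd : ∃ M : ℝ, ∀ r, |T r| ≤ M) :
    0 ≤ (1 / 2) * ∫ x in Ω, ∫ y in Ω,
        (a x y (u₁ y - u₁ x) - a x y (u₂ y - u₂ x)) *
          (T (u₁ y - u₂ y) - T (u₁ x - u₂ x)) ∂(m x) ∂ν :=
  stmt10_general m ν Ω a hmono u₁ u₂ T hT
end

section
/- Failure of the Poincaré inequality for the irrational rotation random walk: Let X = S¹ with arclength distance, ν the 1-dimensional Hausdorff measure on S¹, θ irrational, and m_x := (1/2)δ_{T_{−θ}(x)} + (1/2)δ_{T_θ(x)} where T_θ(x) = x·e^{2πiθ}. Then ν is reversible with respect to m, but for every p > 1 there exists no constant Λ > 0 such that ‖u − (1/(2π))∫_X u dν‖_{L^p(X,ν)} ≤ Λ (∫_X ∫_X |u(y)−u(x)|^p dm_x(y) dν(x))^{1/p} for all u ∈ L^p(X,ν). -/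
/-!
Reversibility is the translation invariance of Haar measure: shifting by `θ` exchanges the
two halves of the step measure. For the Poincaré inequality, test it against `u = Re eₙ`, where
`eₙ` is the `n`-th Fourier character. Then `u` has mean zero and, since `|u| ≤ 1`, its `Lᵖ` norm
is at least `∫ u² = 1/2`, while `|u (x ± θ) - u x| ≤ ‖eₙ θ - 1‖` bounds its energy by
`‖eₙ θ - 1‖ᵖ`. Dirichlet's approximation theorem gives `n ≠ 0` with `nθ` arbitrarily close to
an integer, i.e. `‖eₙ θ - 1‖` arbitrarily small, so no constant `Λ` can work.
-/

open Function MeasureTheory Real Complex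
open scoped ENNReal

section SymmetricStep

variable {G : Type*} [AddGroup G] [MeasurableSpace G]

noncomputable def symmetricStep (t x : G) : Measure G :=
  (1 / 2 : ℝ≥0∞) • Measure.dirac (x - t) + (1 / 2 : ℝ≥0∞) • Measure.dirac (x + t)

lemma lintegral_symmetricStep {g : G → ℝ≥0∞} (hg : Measurable g) (t x : G) :
    ∫⁻ y, g y ∂symmetricStep t x = 1 / 2 * g (x - t) + 1 / 2 * g (x + t) := by
  rw [symmetricStep, lintegral_add_measure, lintegral_smul_measure, lintegral_smul_measure,
    lintegral_dirac' _ hg, lintegral_dirac' _ hg, smul_eq_mul, smul_eq_mul]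

lemma lintegral_symmetricStep_le {g : G → ℝ≥0∞} (hg : Measurable g) {t x : G} {C : ℝ≥0∞}
    (h_sub : g (x - t) ≤ C) (h_add : g (x + t) ≤ C) : ∫⁻ y, g y ∂symmetricStep t x ≤ C :=
  calc ∫⁻ y, g y ∂symmetricStep t x = 1 / 2 * g (x - t) + 1 / 2 * g (x + t) :=
        lintegral_symmetricStep hg t x
    _ ≤ 1 / 2 * C + 1 / 2 * C := by gcongr
    _ = C := by rw [← add_mul, ENNReal.add_halves, one_mul]

lemma rpow_lintegral_lintegral_symmetricStep_le (μ : Measure G) [IsProbabilityMeasure μ]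
    {u : G → ℝ} (hu : Measurable u) {p : ℝ} (hp : 0 < p) {t : G} {η : ℝ}
    (h_sub : ∀ x, |u (x - t) - u x| ≤ η) (h_add : ∀ x, |u (x + t) - u x| ≤ η) :
    (∫⁻ x, ∫⁻ y, ENNReal.ofReal (|u y - u x| ^ p) ∂symmetricStep t x ∂μ) ^ (1 / p)
      ≤ ENNReal.ofReal η := by
  have h_pow (a : ℝ) (ha : |a| ≤ η) : ENNReal.ofReal (|a| ^ p) ≤ ENNReal.ofReal η ^ p := by
    rw [← ENNReal.ofReal_rpow_of_nonneg (abs_nonneg a) hp.le]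
    gcongr
  have h_pointwise (x : G) :
      ∫⁻ y, ENNReal.ofReal (|u y - u x| ^ p) ∂symmetricStep t x ≤ ENNReal.ofReal η ^ p :=
    lintegral_symmetricStep_le (by fun_prop) (h_pow _ (h_sub x)) (h_pow _ (h_add x))
  calc (∫⁻ x, ∫⁻ y, ENNReal.ofReal (|u y - u x| ^ p) ∂symmetricStep t x ∂μ) ^ (1 / p)
      ≤ (∫⁻ _, ENNReal.ofReal η ^ p ∂μ) ^ (1 / p) := by gcongr; exact h_pointwise _
    _ = ENNReal.ofReal η := by
      rw [lintegral_const, measure_univ, mul_one, ← ENNReal.rpow_mul, mul_one_div_cancel hp.ne',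
        ENNReal.rpow_one]

variable [MeasurableAdd G]

lemma lintegral_lintegral_symmetricStep_swap (μ : Measure G) [μ.IsAddRightInvariant]
    {f : G → G → ℝ≥0∞} (hf : Measurable (uncurry f)) (t : G) :
    ∫⁻ x, ∫⁻ y, f x y ∂symmetricStep t x ∂μ = ∫⁻ x, ∫⁻ y, f y x ∂symmetricStep t x ∂μ := by
  have h_sub : Measurable fun x => f x (x - t) :=
    hf.comp (measurable_id.prodMk (measurable_sub_const' t))
  have h_swap_sub : Measurable fun x => f (x - t) x :=
    hf.comp ((measurable_sub_const' t).prodMk measurable_id)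
  simp_rw [lintegral_symmetricStep hf.of_uncurry_left, lintegral_symmetricStep hf.of_uncurry_right]
  rw [lintegral_add_left (h_sub.const_mul _), lintegral_add_left (h_swap_sub.const_mul _),
    lintegral_const_mul _ h_sub, lintegral_const_mul _ h_swap_sub,
    lintegral_const_mul' _ _ (by simp), lintegral_const_mul' _ _ (by simp),
    ← lintegral_add_right_eq_self (fun x => f x (x - t)) t,
    ← lintegral_sub_right_eq_self (fun x => f x (x + t)) t]
  simp only [add_sub_cancel_right, sub_add_cancel]
  rw [add_comm]

end SymmetricStep

lemma enorm_integral_sq_le_rpow_lintegral {α : Type*} [MeasurableSpace α] (μ : Measure α)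
    [IsProbabilityMeasure μ] {u : α → ℝ} (hu : AEStronglyMeasurable u μ) (hu_le : ∀ x, |u x| ≤ 1)
    {p : ℝ} (hp : 1 ≤ p) :
    ‖∫ x, u x ^ 2 ∂μ‖ₑ ≤ (∫⁻ x, ENNReal.ofReal (|u x| ^ p) ∂μ) ^ (1 / p) :=
  calc ‖∫ x, u x ^ 2 ∂μ‖ₑ ≤ ∫⁻ x, ‖u x ^ 2‖ₑ ∂μ := enorm_integral_le_lintegral_enorm _
    _ ≤ ∫⁻ x, ‖u x‖ₑ ∂μ := by
      refine lintegral_mono fun x => ?_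
      simp only [Real.enorm_eq_ofReal_abs, abs_pow]
      exact ENNReal.ofReal_le_ofReal (by nlinarith [abs_nonneg (u x), hu_le x])
    _ = eLpNorm' u 1 μ := by simp [eLpNorm']
    _ ≤ eLpNorm' u p μ := eLpNorm'_le_eLpNorm'_of_exponent_le one_pos hp μ hu
    _ = (∫⁻ x, ENNReal.ofReal (|u x| ^ p) ∂μ) ^ (1 / p) := by
      simp only [eLpNorm', Real.enorm_eq_ofReal_abs,
        ENNReal.ofReal_rpow_of_nonneg (abs_nonneg _) (zero_le_one.trans hp)]

namespace AddCircle

variable {T : ℝ}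

lemma norm_fourier_apply (n : ℤ) (x : AddCircle T) : ‖(fourier n x : ℂ)‖ = 1 :=
  Circle.norm_coe _

lemma abs_re_fourier_le_one (n : ℤ) (x : AddCircle T) : |(fourier n x : ℂ).re| ≤ 1 :=
  (abs_re_le_norm _).trans (norm_fourier_apply n x).le

lemma abs_re_fourier_sub_le (n : ℤ) (x y : AddCircle T) :
    |(fourier n x : ℂ).re - (fourier n y).re| ≤ ‖fourier n (x - y) - 1‖ := by
  have h_factor : (fourier n x : ℂ) - fourier n y = (fourier n (x - y) - 1) * fourier n y := by
    rw [sub_mul, one_mul, fourier_apply, fourier_apply, fourier_apply, ← Circle.coe_mul,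
      ← toCircle_add, ← smul_add, sub_add_cancel]
  rw [← sub_re, h_factor]
  exact (abs_re_le_norm _).trans (by rw [norm_mul, norm_fourier_apply, mul_one])

lemma exists_ne_zero_norm_fourier_sub_one_lt (θ : AddCircle T) {ε : ℝ} (hε : 0 < ε) :
    ∃ n : ℤ, n ≠ 0 ∧ ‖fourier n θ - 1‖ < ε := by
  obtain ⟨ξ, rfl⟩ := QuotientAddGroup.mk_surjective θ
  obtain ⟨N, hN⟩ := exists_nat_gt (2 * π / ε)
  obtain ⟨j, k, hk, -, hjk⟩ := Real.exists_int_int_abs_mul_sub_le (ξ / T) N.succ_pos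
  refine ⟨k, hk.ne', ?_⟩
  have h_exp : (fourier k (ξ : AddCircle T) : ℂ) = exp (I * ↑(2 * π * (k * (ξ / T) - j))) := by
    rw [fourier_coe_apply, show I * ↑(2 * π * (k * (ξ / T) - j))
      = 2 * π * I * k * ξ / T + (-j : ℤ) * (2 * π * I) by push_cast; ring,
      Complex.exp_add, exp_int_mul_two_pi_mul_I, mul_one]
  calc ‖(fourier k (ξ : AddCircle T) : ℂ) - 1‖ ≤ ‖2 * π * (k * (ξ / T) - j)‖ := by
        rw [h_exp]; exact norm_exp_I_mul_ofReal_sub_one_le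
    _ = 2 * π * |k * (ξ / T) - j| := by
        rw [Real.norm_eq_abs, abs_mul, abs_of_pos (by positivity)]
    _ ≤ 2 * π * (1 / (N.succ + 1)) := by gcongr
    _ < ε := by
        rw [div_lt_iff₀ hε] at hN
        rw [mul_one_div, div_lt_iff₀ (by positivity)]
        push_cast
        nlinarith

variable [Fact (0 < T)]

lemma integrable_fourier (n : ℤ) : Integrable (fourier n) (haarAddCircle (T := T)) :=
  (map_continuous _).integrable_of_hasCompactSupport (HasCompactSupport.of_compactSpace _)

lemma integral_re_fourier_eq_zero {n : ℤ} (hn : n ≠ 0) :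
    ∫ x, (fourier n x : ℂ).re ∂haarAddCircle (T := T) = 0 := by
  have h_coeff := congrFun (fourierCoeff_fourier (T := T) n) 0
  simp only [fourierCoeff, neg_zero, fourier_zero, one_smul, Pi.single_apply, hn.symm,
    if_false] at h_coeff
  exact (integral_re (integrable_fourier n)).trans (by rw [h_coeff]; rfl)

lemma integral_re_fourier_sq {n : ℤ} (hn : n ≠ 0) :
    ∫ x, (fourier n x : ℂ).re ^ 2 ∂haarAddCircle (T := T) = 1 / 2 := by
  have h_double (x : AddCircle T) :
      (fourier n x : ℂ).re ^ 2 = (1 + (fourier (n + n) x).re) / 2 := by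
    have h_norm : ‖(fourier n x : ℂ)‖ ^ 2 = 1 := by rw [norm_fourier_apply, one_pow]
    rw [Complex.sq_norm, normSq_apply] at h_norm
    rw [fourier_add, mul_re]
    linarith
  have h_int : Integrable (fun x => (fourier (n + n) x : ℂ).re) (haarAddCircle (T := T)) :=
    (integrable_fourier (n + n)).re
  simp_rw [h_double]
  rw [integral_div, integral_add (integrable_const 1) h_int,
    integral_re_fourier_eq_zero (by omega)]
  simp

lemma memLp_re_fourier (n : ℤ) (p : ℝ≥0∞) :
    MemLp (fun x => (fourier n x : ℂ).re) p (haarAddCircle (T := T)) :=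
  .of_bound (Complex.continuous_re.comp (map_continuous _)).aestronglyMeasurable 1
    (.of_forall (abs_re_fourier_le_one n))

lemma ofReal_half_le_rpow_lintegral_abs_re_fourier {n : ℤ} (hn : n ≠ 0) {p : ℝ} (hp : 1 ≤ p) :
    ENNReal.ofReal (1 / 2)
      ≤ (∫⁻ x, ENNReal.ofReal (|(fourier n x : ℂ).re| ^ p) ∂haarAddCircle (T := T)) ^ (1 / p) := by
  have h := enorm_integral_sq_le_rpow_lintegral haarAddCircle
    (memLp_re_fourier (T := T) n 1).aestronglyMeasurable (abs_re_fourier_le_one n) hp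
  rwa [integral_re_fourier_sq hn, Real.enorm_eq_ofReal_abs, abs_of_pos one_half_pos] at h

lemma rpow_lintegral_lintegral_symmetricStep_re_fourier_le (n : ℤ) (t : AddCircle T) {p : ℝ}
    (hp : 0 < p) :
    (∫⁻ x, ∫⁻ y, ENNReal.ofReal (|(fourier n y : ℂ).re - (fourier n x).re| ^ p)
        ∂symmetricStep t x ∂haarAddCircle (T := T)) ^ (1 / p)
      ≤ ENNReal.ofReal ‖fourier n t - 1‖ :=
  rpow_lintegral_lintegral_symmetricStep_le (u := fun x => (fourier n x : ℂ).re) haarAddCircle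
    (Complex.continuous_re.comp (map_continuous _)).measurable hp
    (fun x => by
      rw [abs_sub_comm]
      simpa only [sub_sub_cancel] using abs_re_fourier_sub_le n x (x - t))
    (fun x => by simpa only [add_sub_cancel_left] using abs_re_fourier_sub_le n (x + t) x)

end AddCircle

theorem stmt18_general (θ : ℝ)
    (m : AddCircle (1 : ℝ) → Measure (AddCircle (1 : ℝ)))
    (hm : ∀ x, m x = (1 / 2 : ℝ≥0∞) • Measure.dirac (x - (θ : AddCircle (1 : ℝ)))
        + (1 / 2 : ℝ≥0∞) • Measure.dirac (x + (θ : AddCircle (1 : ℝ)))) :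
    (∀ f : AddCircle (1 : ℝ) → AddCircle (1 : ℝ) → ℝ≥0∞,
        Measurable (Function.uncurry f) →
        ∫⁻ x, ∫⁻ y, f x y ∂(m x) ∂(volume : Measure (AddCircle (1 : ℝ)))
          = ∫⁻ x, ∫⁻ y, f y x ∂(m x) ∂(volume : Measure (AddCircle (1 : ℝ)))) ∧
      ∀ p : ℝ, 1 < p →
        ¬ ∃ Λ : ℝ, 0 < Λ ∧ ∀ u : AddCircle (1 : ℝ) → ℝ,
            MemLp u (ENNReal.ofReal p) (volume : Measure (AddCircle (1 : ℝ))) →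
            (∫⁻ x, ENNReal.ofReal
                (|u x - (∫ y, u y ∂(volume : Measure (AddCircle (1 : ℝ)))) /
                  ((volume : Measure (AddCircle (1 : ℝ)))
                    (Set.univ : Set (AddCircle (1 : ℝ)))).toReal| ^ p)
              ∂(volume : Measure (AddCircle (1 : ℝ)))) ^ (1 / p)
              ≤ ENNReal.ofReal Λ *
                (∫⁻ x, ∫⁻ y, ENNReal.ofReal (|u y - u x| ^ p) ∂(m x)
                  ∂(volume : Measure (AddCircle (1 : ℝ)))) ^ (1 / p) := by
  obtain rfl : m = symmetricStep (θ : AddCircle (1 : ℝ)) := funext hm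
  have h_vol : (volume : Measure (AddCircle (1 : ℝ))) = AddCircle.haarAddCircle := by
    rw [AddCircle.volume_eq_smul_haarAddCircle, ENNReal.ofReal_one, one_smul]
  refine ⟨fun f hf => lintegral_lintegral_symmetricStep_swap _ hf _, ?_⟩
  rw [h_vol]
  rintro p hp ⟨Λ, hΛ, h_poincare⟩
  obtain ⟨n, hn, h_small⟩ :=
    AddCircle.exists_ne_zero_norm_fourier_sub_one_lt (θ : AddCircle (1 : ℝ)) (ε := (2 * Λ)⁻¹)
      (by positivity)
  have h_ineq := h_poincare _ (AddCircle.memLp_re_fourier n _)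
  rw [AddCircle.integral_re_fourier_eq_zero hn, measure_univ, ENNReal.toReal_one, div_one] at h_ineq
  simp only [sub_zero] at h_ineq
  have h_half :
      ENNReal.ofReal (1 / 2) ≤ ENNReal.ofReal (Λ * ‖fourier n (θ : AddCircle (1 : ℝ)) - 1‖) :=
    calc ENNReal.ofReal (1 / 2)
        ≤ _ := AddCircle.ofReal_half_le_rpow_lintegral_abs_re_fourier hn hp.le
      _ ≤ _ := h_ineq
      _ ≤ _ := by
        gcongr
        exact AddCircle.rpow_lintegral_lintegral_symmetricStep_re_fourier_le n _
          (zero_lt_one.trans hp)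
      _ = _ := (ENNReal.ofReal_mul hΛ.le).symm
  rw [ENNReal.ofReal_le_ofReal_iff (by positivity)] at h_half
  have h_lt : Λ * ‖fourier n (θ : AddCircle (1 : ℝ)) - 1‖ < 1 / 2 := by
    calc _ < Λ * (2 * Λ)⁻¹ := mul_lt_mul_of_pos_left h_small hΛ
      _ = 1 / 2 := by field_simp
  linarith

/-- Failure of the Poincaré inequality for the irrational rotation random walk on the
circle: with `m_x = (1/2) δ_{x-θ} + (1/2) δ_{x+θ}` (θ irrational) and `ν` the Haar measure
on the circle, `ν` is reversible with respect to `m`, but for every `p > 1` there is no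
constant `Λ > 0` such that
`‖u - (mean of u)‖_{L^p} ≤ Λ (∫∫ |u(y)-u(x)|^p dm_x(y) dν(x))^{1/p}` for all
`u ∈ L^p(ν)`. -/
theorem stmt18 [Fact ((0 : ℝ) < 1)] (θ : ℝ) (hθ : Irrational θ)
    (m : AddCircle (1 : ℝ) → Measure (AddCircle (1 : ℝ)))
    (hm : ∀ x, m x = (1 / 2 : ℝ≥0∞) • Measure.dirac (x - (θ : AddCircle (1 : ℝ)))
        + (1 / 2 : ℝ≥0∞) • Measure.dirac (x + (θ : AddCircle (1 : ℝ)))) :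
    (∀ f : AddCircle (1 : ℝ) → AddCircle (1 : ℝ) → ℝ≥0∞,
        Measurable (Function.uncurry f) →
        ∫⁻ x, ∫⁻ y, f x y ∂(m x) ∂(volume : Measure (AddCircle (1 : ℝ)))
          = ∫⁻ x, ∫⁻ y, f y x ∂(m x) ∂(volume : Measure (AddCircle (1 : ℝ)))) ∧
      ∀ p : ℝ, 1 < p →
        ¬ ∃ Λ : ℝ, 0 < Λ ∧ ∀ u : AddCircle (1 : ℝ) → ℝ,
            MemLp u (ENNReal.ofReal p) (volume : Measure (AddCircle (1 : ℝ))) →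
            (∫⁻ x, ENNReal.ofReal
                (|u x - (∫ y, u y ∂(volume : Measure (AddCircle (1 : ℝ)))) /
                  ((volume : Measure (AddCircle (1 : ℝ)))
                    (Set.univ : Set (AddCircle (1 : ℝ)))).toReal| ^ p)
              ∂(volume : Measure (AddCircle (1 : ℝ)))) ^ (1 / p)
              ≤ ENNReal.ofReal Λ *
                (∫⁻ x, ∫⁻ y, ENNReal.ofReal (|u y - u x| ^ p) ∂(m x)
                  ∂(volume : Measure (AddCircle (1 : ℝ)))) ^ (1 / p) :=
  stmt18_general θ m hm
end
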